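/- arXiv:1905.01033 — 2 statements merged into one kernel-verified Lean document; each statement's English description precedes it below -/
import Mathlib

section
/- Let κ be an invertible n×n real matrix, β̄ an n×n real matrix, and set M(ξ) = ξ ⊙ W^{κ^{-1}β̄ − E} where W_j = 1 + ξ_j, i.e., the mapping with j-th component F_j(ξ) = ξ_j · Π_{k=1}^n W_k^{(κ^{-1}β̄ − E)_k^{(j)}}. Then the Jacobian determinant of F with respect to ξ equals W^{(κ^{-1}β̄)I − 2I} · det(E + diag[ξ] · κ^{-1}β̄), where I is the all-ones vector and W^v denotes Π_k W_k^{v_k}. -/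
open Matrix Finset

/-!
Each component `F_j = ξ_j · P_j` is `ξ_j` times a monomial `P_j = ∏ₖ W_k ^ (B - E)_{kj}`,
whose logarithmic derivative in `ξ_i` is `(B - E)_{ij} / W_i`. Hence the Jacobian matrix
factors as `diag(P) · (E + diag(ξ) Bᵀ) · diag(W)⁻¹`. The outer factors contribute
`∏ⱼ P_j · ∏ₖ W_k⁻¹ = W^{BI - 2I}`, and transposing together with
`det (E + XY) = det (E + YX)` turns the middle one into `det (E + diag(ξ) B)`.
-/

section MonomialJacobian

variable {ι : Type*} [Fintype ι] [DecidableEq ι] {ξ : ι → ℝ}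

theorem fderiv_prod_one_add_rpow_single (a : ι → ℝ) (hξ : ∀ k, 0 < 1 + ξ k) (i : ι) :
    fderiv ℝ (fun ζ : ι → ℝ => ∏ k, (1 + ζ k) ^ a k) ξ (Pi.single i 1) =
      a i * (∏ k, (1 + ξ k) ^ a k) / (1 + ξ i) := by
  have hderiv : HasFDerivAt (fun ζ : ι → ℝ => ∏ k, (1 + ζ k) ^ a k)
      (∑ k, (∏ m ∈ univ.erase k, (1 + ξ m) ^ a m) •
        (a k * (1 + ξ k) ^ (a k - 1)) • ContinuousLinearMap.proj k) ξ :=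
    HasFDerivAt.finsetProd (g := fun k (ζ : ι → ℝ) => (1 + ζ k) ^ a k) fun k _ =>
      ((hasFDerivAt_apply k ξ).const_add 1).rpow_const (Or.inl (hξ k).ne')
  rw [hderiv.fderiv, _root_.sum_apply, sum_eq_single i (fun k _ hk => by simp [hk]) (by simp),
    ← mul_prod_erase univ _ (mem_univ i), Real.rpow_sub (hξ i), Real.rpow_one]
  simp only [_root_.smul_apply, ContinuousLinearMap.proj_apply, Pi.single_eq_same, smul_eq_mul,
    mul_one]
  field_simp

theorem fderiv_mul_prod_one_add_rpow_single (a : ι → ℝ) (hξ : ∀ k, 0 < 1 + ξ k)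
    (j i : ι) :
    fderiv ℝ (fun ζ : ι → ℝ => ζ j * ∏ k, (1 + ζ k) ^ a k) ξ (Pi.single i 1) =
      (∏ k, (1 + ξ k) ^ a k) * ((1 : Matrix ι ι ℝ) j i + ξ j * a i / (1 + ξ i)) := by
  have hprod : DifferentiableAt ℝ (fun ζ : ι → ℝ => ∏ k, (1 + ζ k) ^ a k) ξ := by
    fun_prop (disch := exact Or.inl (hξ _).ne')
  rw [fderiv_fun_mul (differentiableAt_apply j ξ) hprod, _root_.add_apply, _root_.smul_apply,
    _root_.smul_apply, fderiv_prod_one_add_rpow_single a hξ i, (hasFDerivAt_apply j ξ).fderiv,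
    ContinuousLinearMap.proj_apply, Pi.single_apply, one_apply]
  simp only [smul_eq_mul]
  split_ifs <;> ring

theorem jacobian_mul_prod_one_add_rpow_eq (B : Matrix ι ι ℝ) (hξ : ∀ k, 0 < 1 + ξ k) :
    (of fun j i => fderiv ℝ (fun ζ : ι → ℝ => ζ j * ∏ k, (1 + ζ k) ^ (B - 1) k j) ξ
      (Pi.single i 1)) =
      diagonal (fun j => ∏ k, (1 + ξ k) ^ (B - 1) k j) * (1 + diagonal ξ * Bᵀ) *
        diagonal fun i => (1 + ξ i)⁻¹ := by
  ext j i
  have hW := (hξ i).ne'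
  rw [of_apply, fderiv_mul_prod_one_add_rpow_single _ hξ, mul_diagonal, diagonal_mul,
    Matrix.add_apply, diagonal_mul, transpose_apply, Matrix.sub_apply]
  rcases eq_or_ne j i with rfl | hji
  · simp only [one_apply_eq]
    field_simp
    ring
  · simp only [one_apply_ne hji, one_apply_ne hji.symm]
    ring

theorem prod_prod_rpow_sub_one_mul_prod_inv {x : ι → ℝ} (hx : ∀ k, 0 < x k)
    (B : Matrix ι ι ℝ) :
    (∏ j, ∏ k, x k ^ (B - 1) k j) * ∏ k, (x k)⁻¹ = ∏ k, x k ^ (∑ j, B k j - 2) := by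
  rw [prod_comm, ← prod_mul_distrib]
  refine prod_congr rfl fun k _ => ?_
  rw [← Real.rpow_sum_of_pos (hx k), ← Real.rpow_neg_one, ← Real.rpow_add (hx k)]
  simp only [Matrix.sub_apply, one_apply, sum_sub_distrib, sum_ite_eq, mem_univ, if_true]
  ring_nf

theorem det_jacobian_mul_prod_one_add_rpow (B : Matrix ι ι ℝ) (hξ : ∀ k, 0 < 1 + ξ k) :
    (of fun j i => fderiv ℝ (fun ζ : ι → ℝ => ζ j * ∏ k, (1 + ζ k) ^ (B - 1) k j) ξ
      (Pi.single i 1)).det =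
      (∏ k, (1 + ξ k) ^ (∑ j, B k j - 2)) * (1 + diagonal ξ * B).det := by
  have hdet : (1 + diagonal ξ * Bᵀ).det = (1 + diagonal ξ * B).det := by
    rw [← det_transpose, transpose_add, transpose_mul, transpose_one, transpose_transpose,
      diagonal_transpose, det_one_add_mul_comm]
  rw [jacobian_mul_prod_one_add_rpow_eq B hξ, det_mul, det_mul, det_diagonal, det_diagonal, hdet,
    mul_right_comm, prod_prod_rpow_sub_one_mul_prod_inv hξ]

end MonomialJacobian

theorem jacobian_of_linearization_general (n : ℕ) (B : Matrix (Fin n) (Fin n) ℝ)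
    (F : (Fin n → ℝ) → Fin n → ℝ)
    (hF : ∀ ξ j, F ξ j = ξ j * ∏ k, (1 + ξ k) ^ ((B - 1) k j))
    (ξ : Fin n → ℝ) (hξ : ∀ k, 0 < 1 + ξ k) :
    (Matrix.of fun j i => fderiv ℝ (fun ζ => F ζ j) ξ (Pi.single i 1)).det =
      (∏ k, (1 + ξ k) ^ ((∑ j, B k j) - 2)) *
        ((1 : Matrix (Fin n) (Fin n) ℝ) + Matrix.diagonal ξ * B).det := by
  obtain rfl : F = fun ζ j => ζ j * ∏ k, (1 + ζ k) ^ ((B - 1) k j) := funext₂ hF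
  exact det_jacobian_mul_prod_one_add_rpow B hξ

/-- The Jacobian determinant of the linearization mapping
`F_j(ξ) = ξ_j · Π_k W_k^{(κ⁻¹β̄ − E)_k^{(j)}}`, `W_k = 1 + ξ_k`, equals
`W^{(κ⁻¹β̄)I − 2I} · det(E + diag[ξ]·κ⁻¹β̄)`. -/
theorem jacobian_of_linearization (n : ℕ) (κ βbar : Matrix (Fin n) (Fin n) ℝ)
    (hκ : IsUnit κ.det) (B : Matrix (Fin n) (Fin n) ℝ) (hB : B = κ⁻¹ * βbar)
    (F : (Fin n → ℝ) → Fin n → ℝ)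
    (hF : ∀ ξ j, F ξ j = ξ j * ∏ k, (1 + ξ k) ^ ((B - 1) k j))
    (ξ : Fin n → ℝ) (hξ : ∀ k, 0 < 1 + ξ k) :
    (Matrix.of fun j i => fderiv ℝ (fun ζ => F ζ j) ξ (Pi.single i 1)).det =
      (∏ k, (1 + ξ k) ^ ((∑ j, B k j) - 2)) *
        ((1 : Matrix (Fin n) (Fin n) ℝ) + Matrix.diagonal ξ * B).det :=
  jacobian_of_linearization_general n B F hF ξ hξ
end

section
/- Let ω be a nonsingular n×n integer matrix and suppose (ξ, W) ↦ (x, y) is defined by y = W^{−ω^{-1}} (i.e., y_j = Π_i W_i^{−(ω^{-1})_i^{(j)}}) and x = ξ ⊙ W^{ω^{-1}σ − E} with W = ξ + I. Then y satisfies the reduced trinomial system y^{ω^{(i)}} + x_i y^{σ^{(i)}} − 1 = 0 for i = 1,…,n. -/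
/-!
Write `W = 1 + ξ` and `A = ω⁻¹`. Since `W > 0`, monomials `W^a := ∏ₖ Wₖ^{aₖ}` with real exponents
compose linearly: the `B`-th power of the vector of monomials with exponent matrix `A` is the
monomial with exponent matrix `A B`. Hence `y^{ω^{(i)}} = W^{-(ω⁻¹ω)^{(i)}} = Wᵢ⁻¹` and
`xᵢ y^{σ^{(i)}} = ξᵢ W^{(ω⁻¹σ − E)^{(i)} − (ω⁻¹σ)^{(i)}} = ξᵢ Wᵢ⁻¹`, which add up to `1`.
-/

open Matrix Finset

namespace Real

variable {ι ι' κ : Type*} [Fintype ι] [Fintype κ] {W : κ → ℝ}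

theorem prod_rpow_add (hW : ∀ k, 0 < W k) (u v : κ → ℝ) :
    ∏ k, W k ^ (u k + v k) = (∏ k, W k ^ u k) * ∏ k, W k ^ v k := by
  rw [← prod_mul_distrib]
  exact prod_congr rfl fun k _ => rpow_add (hW k) _ _

theorem prod_rpow_mul_zpow (hW : ∀ k, 0 < W k) (a : κ → ℝ) (c : ℤ) :
    (∏ k, W k ^ a k) ^ c = ∏ k, W k ^ (a k * c) := by
  rw [← rpow_intCast, ← finsetProd_rpow _ _ fun k _ => (rpow_pos_of_pos (hW k) _).le]
  exact prod_congr rfl fun k _ => (rpow_mul (hW k).le _ _).symm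

theorem prod_zpow_prod_rpow (hW : ∀ k, 0 < W k) (A : Matrix κ ι ℝ) (B : Matrix ι ι' ℤ)
    (i : ι') :
    ∏ j, (∏ k, W k ^ A k j) ^ B j i = ∏ k, W k ^ (A * B.map (Int.cast : ℤ → ℝ)) k i := by
  simp_rw [prod_rpow_mul_zpow hW, mul_apply, map_apply]
  rw [prod_comm]
  exact prod_congr rfl fun k _ => (rpow_sum_of_pos (hW k) _ _).symm

theorem prod_rpow_neg_one_apply [DecidableEq κ] (W : κ → ℝ) (i : κ) :
    ∏ k, W k ^ (-1 : Matrix κ κ ℝ) k i = (W i)⁻¹ := by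
  rw [prod_eq_single i (fun k _ hk => by simp [one_apply_ne hk]) (by simp)]
  simp [rpow_neg_one]

end Real

open Real

/-- The linearization `y = W^{−ω⁻¹}`, `x = ξ ⊙ W^{ω⁻¹σ − E}` (with `W = ξ + I`)
produces a solution of the reduced trinomial system
`y^{ω^{(i)}} + x_i y^{σ^{(i)}} − 1 = 0`, `i = 1,…,n`. -/
theorem linearization_solves_reduced_system (n : ℕ) (ω σ : Matrix (Fin n) (Fin n) ℤ)
    (hω : ω.det ≠ 0) (ξ : Fin n → ℝ) (hξ : ∀ k, 0 < 1 + ξ k)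
    (M : Matrix (Fin n) (Fin n) ℝ)
    (hM : M = (ω.map (Int.cast : ℤ → ℝ))⁻¹ * σ.map (Int.cast : ℤ → ℝ))
    (y x : Fin n → ℝ)
    (hy : ∀ j, y j = ∏ i, (1 + ξ i) ^ (-((ω.map (Int.cast : ℤ → ℝ))⁻¹ i j)))
    (hx : ∀ i, x i = ξ i * ∏ k, (1 + ξ k) ^ ((M - 1) k i)) :
    ∀ i, (∏ j, y j ^ (ω j i)) + x i * (∏ j, y j ^ (σ j i)) - 1 = 0 := by
  intro i
  set A := (ω.map (Int.cast : ℤ → ℝ))⁻¹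
  have hA_mul_ω : A * ω.map (Int.cast : ℤ → ℝ) = 1 := by
    refine nonsing_inv_mul _ (isUnit_iff_ne_zero.2 ?_)
    rw [← Int.cast_det]
    exact_mod_cast hω
  have hy' : y = fun j => ∏ k, (1 + ξ k) ^ (-A) k j := funext hy
  have h_first : ∏ j, y j ^ ω j i = (1 + ξ i)⁻¹ := by
    rw [hy', prod_zpow_prod_rpow hξ, neg_mul, hA_mul_ω,
      prod_rpow_neg_one_apply (fun k => 1 + ξ k)]
  have h_second : x i * ∏ j, y j ^ σ j i = ξ i * (1 + ξ i)⁻¹ := by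
    rw [hy', prod_zpow_prod_rpow hξ, neg_mul, ← hM, hx, mul_assoc, ← prod_rpow_add hξ]
    simp only [← Matrix.add_apply]
    rw [show M - 1 + -M = -1 by abel, prod_rpow_neg_one_apply (fun k => 1 + ξ k)]
  rw [h_first, h_second, ← one_add_mul, mul_inv_cancel₀ (hξ i).ne', sub_self]
end
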